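/- arXiv:1107.0388 — 2 statements merged into one kernel-verified Lean document; each statement's English description precedes it below -/
import Mathlib

section
/- Let $R = \mathbb{C}[x,y]/(x^2 - y^p)$ with $p > 2$ odd, localized at the maximal ideal $(x,y)$. The local Brian\c{c}on-Skoda number of $R$ is $\frac{p-1}{2}$: i.e., $\frac{p-1}{2}$ is the smallest integer $\tilde\mu_0$ such that for every element $g$ of the maximal ideal and every $\psi$, if $|\psi| \le C|g|^{1+\tilde\mu_0}$ holds in a neighborhood of the origin on the curve $\{x^2 = y^p\}$, then $\psi \in (g)$. -/
open Filter

/-- Germ at `0` of an element of `R = ℂ{t²,t^p} ⊂ ℂ{t}`, the local ring of the cusp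
`x² = y^p` pulled back by the normalization `t ↦ (t^p, t²)`: a function analytic at
`0` whose odd Taylor coefficients of order `< p` vanish. -/
def InCusp (p : ℕ) (f : ℂ → ℂ) : Prop :=
  AnalyticAt ℂ f 0 ∧ ∀ k : ℕ, k < p → Odd k → iteratedDeriv k f 0 = 0

/-- The Briançon–Skoda property of `R = ℂ[x,y]/(x² - y^p)` localized at `(x,y)`,
with exponent `μ̃₀`: for every `g` in the maximal ideal and every `ψ`, if
`|ψ| ≤ C|g|^{1+μ̃₀}` near the origin on the curve `{x² = y^p}` (equivalently,
after pullback by the normalization, near `t = 0`), then `ψ ∈ (g)`. -/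
def CuspBS (p μ : ℕ) : Prop :=
  ∀ g ψ : ℂ → ℂ, InCusp p g → InCusp p ψ → g 0 = 0 →
    (∃ C : ℝ, ∀ᶠ t in nhds (0 : ℂ),
      ‖ψ t‖ ≤ C * ‖g t‖ ^ (1 + μ)) →
    ∃ ρ : ℂ → ℂ, InCusp p ρ ∧ ∀ᶠ t in nhds (0 : ℂ), ψ t = g t * ρ t

open Topology

/-!
On the normalization, `R` is the ring of germs in `ℂ{t}` without odd monomials of degree `< p`.
So every germ of order `≥ p - 1` lies in `R`, and no germ of odd order `< p` does.
A bound `|ψ| ≤ C|g|^(1+μ)` forces `ord ψ ≥ (1 + μ) ord g`; as `g ∈ 𝔪` has order at least `2`,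
for `μ = (p - 1)/2` the quotient `ψ / g` has order `≥ p - 1` and lies in `R`.
For smaller `μ`, the pair `g = t²`, `ψ = t^p` satisfies the bound, but `ψ / g = t^(p - 2)` has odd
order `p - 2 < p`.
-/

section AnalyticOrder

variable {𝕜 E F : Type*} [NontriviallyNormedField 𝕜] [NormedAddCommGroup E] [NormedSpace 𝕜 E]
  [NormedAddCommGroup F] [NormedSpace 𝕜 F] {f : 𝕜 → E} {g : 𝕜 → F} {z₀ : 𝕜}

theorem analyticOrderAt_le_of_eventually_norm_le (hf : AnalyticAt 𝕜 f z₀)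
    (hg : AnalyticAt 𝕜 g z₀) {C : ℝ} (hle : ∀ᶠ z in 𝓝 z₀, ‖f z‖ ≤ C * ‖g z‖) :
    analyticOrderAt g z₀ ≤ analyticOrderAt f z₀ := by
  by_cases hf_top : analyticOrderAt f z₀ = ⊤
  · exact hf_top ▸ le_top
  obtain ⟨m, hm⟩ := ENat.ne_top_iff_exists.mp hf_top
  obtain ⟨v, hv, hv0, hfv⟩ := hf.analyticOrderAt_eq_natCast.mp hm.symm
  rw [← hm, ← not_lt, ← ENat.natCast_add_one_le_iff, ← Nat.cast_add_one]
  intro hmg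
  obtain ⟨h, hh, hgh⟩ := (natCast_le_analyticOrderAt hg).mp hmg
  -- dividing the bound by `‖z - z₀‖ ^ m` leaves a right-hand side vanishing at `z₀`
  have hvh : ∀ᶠ z in 𝓝[≠] z₀, ‖v z‖ ≤ C * (‖z - z₀‖ * ‖h z‖) := by
    filter_upwards [self_mem_nhdsWithin, nhdsWithin_le_nhds (hle.and (hfv.and hgh))]
      with z hz ⟨hz_le, hz_f, hz_g⟩
    have hpos : 0 < ‖z - z₀‖ ^ m := pow_pos (norm_pos_iff.mpr (sub_ne_zero.mpr hz)) m
    rw [hz_f, hz_g, pow_succ] at hz_le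
    simp only [norm_smul, norm_mul, norm_pow] at hz_le
    exact le_of_mul_le_mul_left (by linarith) hpos
  have hcont : ContinuousAt (fun z ↦ C * (‖z - z₀‖ * ‖h z‖)) z₀ := by
    have := hh.continuousAt; fun_prop
  have hv_le := le_of_tendsto_of_tendsto
    (hv.continuousAt.norm.tendsto.mono_left nhdsWithin_le_nhds)
    (hcont.tendsto.mono_left nhdsWithin_le_nhds) hvh
  simp only [sub_self, norm_zero, zero_mul, mul_zero, norm_le_zero_iff] at hv_le
  exact hv0 hv_le

theorem exists_analyticAt_eventuallyEq_mul_of_analyticOrderAt_add_le {f g : 𝕜 → 𝕜}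
    (hf : AnalyticAt 𝕜 f z₀) (hg : AnalyticAt 𝕜 g z₀) {n : ℕ}
    (hle : analyticOrderAt g z₀ + n ≤ analyticOrderAt f z₀) :
    ∃ ρ : 𝕜 → 𝕜, AnalyticAt 𝕜 ρ z₀ ∧ n ≤ analyticOrderAt ρ z₀ ∧ f =ᶠ[𝓝 z₀] g * ρ := by
  by_cases hg_top : analyticOrderAt g z₀ = ⊤
  · rw [hg_top, top_add, top_le_iff, analyticOrderAt_eq_top] at hle
    refine ⟨0, analyticAt_const, ?_, ?_⟩
    · rw [show analyticOrderAt (0 : 𝕜 → 𝕜) z₀ = ⊤ from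
        analyticOrderAt_eq_top.mpr (Eventually.of_forall fun _ ↦ rfl)]
      exact le_top
    · filter_upwards [hle] with z hz
      simp [hz]
  obtain ⟨m, hm⟩ := ENat.ne_top_iff_exists.mp hg_top
  obtain ⟨u, hu, hu0, hgu⟩ := hg.analyticOrderAt_eq_natCast.mp hm.symm
  obtain ⟨h, hh, hfh⟩ := (natCast_le_analyticOrderAt hf (n := m + n)).mp (by simpa [← hm] using hle)
  refine ⟨fun z ↦ (z - z₀) ^ n * (h z / u z), by fun_prop (disch := assumption), ?_, ?_⟩
  · exact (natCast_le_analyticOrderAt (by fun_prop (disch := assumption))).mpr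
      ⟨fun z ↦ h z / u z, by fun_prop (disch := assumption), Eventually.of_forall fun z ↦ rfl⟩
  · filter_upwards [hfh, hgu, hu.continuousAt.eventually_ne hu0] with z hz_f hz_g hz_u
    simp only [Pi.mul_apply, hz_f, hz_g, smul_eq_mul]
    field_simp
    ring

end AnalyticOrder

theorem analyticOrderAt_fun_pow_zero {𝕜 : Type*} [NontriviallyNormedField 𝕜] (n : ℕ) :
    analyticOrderAt (fun z : 𝕜 ↦ z ^ n) 0 = n := by
  have h := analyticOrderAt_centeredMonomial (z₀ := (0 : 𝕜)) (n := n)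
  simp only [sub_zero] at h
  exact h

variable {p : ℕ} {f : ℂ → ℂ}

theorem inCusp_pow {n : ℕ} (hn : Even n ∨ p ≤ n) : InCusp p (· ^ n) := by
  refine ⟨by fun_prop, fun k hk hk_odd ↦ ?_⟩
  have hkn : k ≠ n := by
    rintro rfl
    rcases hn with hn | hn
    · exact Nat.not_even_iff_odd.mpr hk_odd hn
    · omega
  rw [iteratedDeriv_fun_pow_zero, if_neg hkn, Nat.cast_zero]

theorem inCusp_of_le_analyticOrderAt (hp : Odd p) (hf : AnalyticAt ℂ f 0)
    (h : ((p - 1 : ℕ) : ℕ∞) ≤ analyticOrderAt f 0) : InCusp p f := by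
  refine ⟨hf, fun k hk hk_odd ↦ (natCast_le_analyticOrderAt_iff_iteratedDeriv_eq_zero hf).mp h k ?_⟩
  obtain ⟨a, rfl⟩ := hp
  obtain ⟨b, rfl⟩ := hk_odd
  omega

theorem InCusp.two_le_analyticOrderAt (hp : 1 < p) (hf : InCusp p f) (h0 : f 0 = 0) :
    2 ≤ analyticOrderAt f 0 := by
  refine (natCast_le_analyticOrderAt_iff_iteratedDeriv_eq_zero hf.1 (n := 2)).mpr fun k hk ↦ ?_
  interval_cases k
  · simpa using h0
  · exact hf.2 1 hp odd_one

theorem InCusp.analyticOrderAt_ne (hf : InCusp p f) {k : ℕ} (hk : k < p) (hk_odd : Odd k) :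
    analyticOrderAt f 0 ≠ k := fun h ↦
  ((analyticOrderAt_eq_nat_iff_iteratedDeriv_eq_zero hf.1).mp h).2 (hf.2 k hk hk_odd)

theorem cuspBS_sub_one_div_two (hp : 1 < p) (hodd : Odd p) : CuspBS p ((p - 1) / 2) := by
  intro g ψ hg hψ hg0 ⟨C, hC⟩
  set μ := (p - 1) / 2
  have hψg : (1 + μ) • analyticOrderAt g 0 ≤ analyticOrderAt ψ 0 := by
    rw [← analyticOrderAt_pow hg.1]
    refine analyticOrderAt_le_of_eventually_norm_le hψ.1 (hg.1.pow _) (C := C) ?_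
    simpa only [Pi.pow_apply, norm_pow] using hC
  have hg2 := hg.two_le_analyticOrderAt hp hg0
  have hμ : ((p - 1 : ℕ) : ℕ∞) = μ • 2 := by
    obtain ⟨b, rfl⟩ := hodd
    rw [nsmul_eq_mul]
    norm_cast
    omega
  obtain ⟨ρ, hρ, hρ_ord, hψρ⟩ :=
    exists_analyticAt_eventuallyEq_mul_of_analyticOrderAt_add_le hψ.1 hg.1 (n := p - 1) <| calc
      analyticOrderAt g 0 + (p - 1 : ℕ) = analyticOrderAt g 0 + μ • 2 := by rw [hμ]
      _ ≤ (1 + μ) • analyticOrderAt g 0 := by rw [add_smul, one_smul]; gcongr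
      _ ≤ analyticOrderAt ψ 0 := hψg
  exact ⟨ρ, inCusp_of_le_analyticOrderAt hodd hρ hρ_ord, hψρ⟩

theorem le_of_cuspBS (hodd : Odd p) {μ : ℕ} (h : CuspBS p μ) : (p - 1) / 2 ≤ μ := by
  by_contra! hlt
  obtain ⟨b, rfl⟩ := hodd
  have hbound : ∃ C : ℝ, ∀ᶠ t in 𝓝 (0 : ℂ), ‖t ^ (2 * b + 1)‖ ≤ C * ‖t ^ 2‖ ^ (1 + μ) := by
    refine ⟨1, ?_⟩
    filter_upwards [Metric.closedBall_mem_nhds (0 : ℂ) one_pos] with t ht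
    rw [one_mul, norm_pow, norm_pow, ← pow_mul]
    exact pow_le_pow_of_le_one (norm_nonneg t) (by simpa using ht) (by omega)
  obtain ⟨ρ, hρ, hpρ⟩ := h (· ^ 2) (· ^ (2 * b + 1)) (inCusp_pow (.inl even_two))
    (inCusp_pow (.inr le_rfl)) (zero_pow two_ne_zero) hbound
  have hord : ((2 * b + 1 : ℕ) : ℕ∞) = 2 + analyticOrderAt ρ 0 := calc
    _ = analyticOrderAt (· ^ (2 * b + 1)) 0 := (analyticOrderAt_fun_pow_zero _).symm
    _ = analyticOrderAt ((· ^ 2) * ρ) 0 :=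
      analyticOrderAt_congr (hpρ.mono fun _ ht ↦ by simpa using ht)
    _ = 2 + analyticOrderAt ρ 0 := by
      rw [analyticOrderAt_mul (by fun_prop) hρ.1, analyticOrderAt_fun_pow_zero, Nat.cast_ofNat]
  have hρ_top : analyticOrderAt ρ 0 ≠ ⊤ := fun h_top ↦
    ENat.natCast_ne_top _ (by rw [hord, h_top, add_top])
  obtain ⟨m, hm⟩ := ENat.ne_top_iff_exists.mp hρ_top
  rw [← hm] at hord
  norm_cast at hord
  exact hρ.analyticOrderAt_ne (k := m) (by omega) ⟨b - 1, by omega⟩ hm.symm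

theorem stmt3 (p : ℕ) (hp : 2 < p) (hodd : Odd p) :
    IsLeast {μ : ℕ | CuspBS p μ} ((p - 1) / 2) :=
  ⟨cuspBS_sub_one_div_two (one_lt_two.trans hp) hodd, fun _ ↦ le_of_cuspBS hodd⟩
end

section
/- Let $2 \le m \le n$ and $d \ge 2$, and consider the polynomials $F_1 = z_1^d$, $F_j = z_{j-1} z_m^{d-1} - z_j^d$ for $2 \le j \le m-1$, and $F_m = z_{m-1} z_m^{d-1} - 1$ in $\mathbb{C}[z_1,\dots,z_n]$. If $Q_1,\dots,Q_m$ are polynomials with $F_1 Q_1 + \cdots + F_m Q_m = 1$, then $\deg Q_1 \ge d^m - d$, and hence $\deg(F_1 Q_1) \ge d^m$. -/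
/-!
Substitute the curve `t ↦ (t^(d^(m-1)-1), …, t^(d-1), t⁻¹, 0, …, 0)` into the identity
`∑ F_j Q_j = 1`, working in `ℂ[T;T⁻¹]`. Along the curve `F_j = 0` for `j ≥ 2` and
`F_1 = t^(d^m-d)`, so `Q_1(curve) = t^(-(d^m-d))`. Every coordinate of the curve becomes a
polynomial in `t` after multiplication by `t`, hence `t^(deg Q_1) · Q_1(curve)` is a polynomial,
which forces `deg Q_1 ≥ d^m - d`.
-/

open MvPolynomial

/-- Kollár's polynomials `F₁ = z₁^d`, `F_j = z_{j-1} z_m^{d-1} - z_j^d` for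
`2 ≤ j ≤ m-1`, `F_m = z_{m-1} z_m^{d-1} - 1`, in `ℂ[z₁,…,z_n]` (indices shifted to
start at `0`: variable `z_j` is `X ⟨j-1⟩`, polynomial `F_j` is `KollarF ⟨j-1⟩`). -/
noncomputable def KollarF (n m d : ℕ) (hm : 2 ≤ m) (hmn : m ≤ n) :
    Fin m → MvPolynomial (Fin n) ℂ := fun j =>
  if (j : ℕ) = 0 then
    X (Fin.castLE hmn j) ^ d
  else if (j : ℕ) = m - 1 then
    X (⟨m - 2, by omega⟩ : Fin n) * X (⟨m - 1, by omega⟩ : Fin n) ^ (d - 1) - 1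
  else
    X (⟨(j : ℕ) - 1, by omega⟩ : Fin n) * X (⟨m - 1, by omega⟩ : Fin n) ^ (d - 1)
      - X (Fin.castLE hmn j) ^ d

open LaurentPolynomial
open Polynomial (toLaurent toLaurentAlg toLaurent_X toLaurent_X_pow trunc_toLaurent)

theorem MvPolynomial.pow_mul_aeval_mem_of_totalDegree_le {R B σ : Type*} [CommSemiring R]
    [CommSemiring B] [Algebra R B] (S : Subalgebra R B) {u : B} (hu : u ∈ S) {v : σ → B}
    (hv : ∀ i, u * v i ∈ S) {p : MvPolynomial σ R} {D : ℕ} (hp : p.totalDegree ≤ D) :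
    u ^ D * aeval v p ∈ S := by
  classical
  rw [p.as_sum, map_sum, Finset.mul_sum]
  refine S.sum_mem fun α hα => ?_
  have hαD : (α.sum fun _ e => e) ≤ D := (le_totalDegree hα).trans hp
  have hprod : u ^ (α.sum fun _ e => e) * α.prod (fun i k => v i ^ k) =
      α.prod fun i k => (u * v i) ^ k := by
    simp only [Finsupp.prod, Finsupp.sum, mul_pow, Finset.prod_mul_distrib,
      Finset.prod_pow_eq_pow_sum]
  rw [aeval_monomial, ← Nat.sub_add_cancel hαD, pow_add, mul_left_comm, mul_assoc, hprod]
  exact S.mul_mem (S.algebraMap_mem _) (S.mul_mem (S.pow_mem hu _)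
    (S.prod_mem fun i _ => S.pow_mem (hv i) _))

theorem LaurentPolynomial.nonneg_of_toLaurent_eq_T {R : Type*} [Semiring R] [Nontrivial R]
    {g : Polynomial R} {k : ℤ} (h : toLaurent g = T k) : 0 ≤ k := by
  by_contra hk
  have hg : g = 0 := by
    rw [← trunc_toLaurent g, h, ← one_mul (T k), ← map_one C, trunc_C_mul_T, if_neg hk]
  exact (isUnit_T k).ne_zero (by rw [← h, hg, map_zero])

theorem MvPolynomial.le_totalDegree_of_aeval_eq_T {R σ : Type*} [CommRing R] [Nontrivial R]
    {v : σ → R[T;T⁻¹]} (hv : ∀ i, T 1 * v i ∈ (toLaurentAlg (R := R)).range)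
    {p : MvPolynomial σ R} {N : ℤ} (h : aeval v p = T (-N)) : N ≤ p.totalDegree := by
  obtain ⟨g, hg : toLaurent g = _⟩ := pow_mul_aeval_mem_of_totalDegree_le _
    (toLaurent_X (R := R) ▸ AlgHom.mem_range_self _ _) hv le_rfl
  rw [h, T_pow, ← T_add] at hg
  linarith [nonneg_of_toLaurent_eq_T hg]

noncomputable def kollarCurve (m d : ℕ) {n : ℕ} : Fin n → ℂ[T;T⁻¹] := fun i =>
  if (i : ℕ) < m - 1 then T ((d : ℤ) ^ (m - 1 - i) - 1)
  else if (i : ℕ) = m - 1 then T (-1) else 0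

section kollarCurve

variable {n m d : ℕ}

theorem T_one_mul_kollarCurve_mem (i : Fin n) :
    T 1 * kollarCurve m d i ∈ (toLaurentAlg (R := ℂ)).range := by
  unfold kollarCurve
  split_ifs
  · refine ⟨Polynomial.X ^ (d ^ (m - 1 - i)), ?_⟩
    change toLaurent _ = _
    rw [toLaurent_X_pow, ← T_add]
    push_cast
    ring_nf
  · exact ⟨1, by rw [map_one, ← T_add, add_neg_cancel, T_zero]⟩
  · rw [mul_zero]
    exact Subalgebra.zero_mem _

theorem aeval_kollarCurve_X_pow {i : Fin n} (hi : (i : ℕ) < m - 1) :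
    aeval (kollarCurve m d) (X i ^ d : MvPolynomial (Fin n) ℂ) =
      T ((d : ℤ) ^ (m - 1 - i + 1) - d) := by
  rw [map_pow, aeval_X, kollarCurve, if_pos hi, T_pow]
  congr 1
  ring

theorem aeval_kollarCurve_X_mul_X_pow (hd : 1 ≤ d) {i k : Fin n} (hi : (i : ℕ) < m - 1)
    (hk : (k : ℕ) = m - 1) :
    aeval (kollarCurve m d) (X i * X k ^ (d - 1) : MvPolynomial (Fin n) ℂ) =
      T ((d : ℤ) ^ (m - 1 - i) - d) := by
  rw [map_mul, map_pow, aeval_X, aeval_X, kollarCurve, kollarCurve, if_pos hi,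
    if_neg (by omega), if_pos hk, T_pow, ← T_add]
  congr 1
  push_cast [hd]
  ring

theorem aeval_kollarCurve_kollarF (hm : 2 ≤ m) (hmn : m ≤ n) (hd : 1 ≤ d) (j : Fin m) :
    aeval (kollarCurve m d) (KollarF n m d hm hmn j) =
      if (j : ℕ) = 0 then T ((d : ℤ) ^ m - d) else 0 := by
  unfold KollarF
  split_ifs with h0 hlast
  · rw [aeval_kollarCurve_X_pow (by rw [Fin.val_castLE]; omega)]
    congr 3
    rw [Fin.val_castLE, h0]; omega
  · rw [map_sub, aeval_kollarCurve_X_mul_X_pow hd (by dsimp only; omega) rfl, map_one,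
      show m - 1 - (m - 2) = 1 by omega, pow_one, sub_self, T_zero, sub_self]
  · rw [map_sub, aeval_kollarCurve_X_mul_X_pow hd (by dsimp only; omega) rfl,
      aeval_kollarCurve_X_pow (by rw [Fin.val_castLE]; omega), sub_eq_zero]
    congr 3
    rw [Fin.val_castLE]; dsimp only; omega

end kollarCurve

theorem stmt4 (n m d : ℕ) (hm : 2 ≤ m) (hmn : m ≤ n) (hd : 2 ≤ d)
    (Q : Fin m → MvPolynomial (Fin n) ℂ)
    (hQ : ∑ j, KollarF n m d hm hmn j * Q j = 1) :
    d ^ m - d ≤ (Q ⟨0, by omega⟩).totalDegree ∧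
      d ^ m ≤ (KollarF n m d hm hmn ⟨0, by omega⟩ * Q ⟨0, by omega⟩).totalDegree := by
  have hd1 : 1 ≤ d := by omega
  have hcurve : aeval (kollarCurve m d) (Q ⟨0, by omega⟩) = T (-((d : ℤ) ^ m - d)) := by
    have h := congrArg (aeval (kollarCurve m d)) hQ
    rw [map_sum, map_one, Fintype.sum_eq_single ⟨0, by omega⟩ fun j hj => by
      rw [map_mul, aeval_kollarCurve_kollarF hm hmn hd1, if_neg (Fin.val_ne_iff.mpr hj),
        zero_mul], map_mul, aeval_kollarCurve_kollarF hm hmn hd1, if_pos rfl] at h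
    rw [← one_mul (aeval _ _), ← T_zero, ← neg_add_cancel ((d : ℤ) ^ m - d), T_add, mul_assoc,
      h, mul_one]
  have hQ0 : Q ⟨0, by omega⟩ ≠ 0 := fun h0 =>
    (isUnit_T _).ne_zero (by rw [← hcurve, h0, map_zero])
  have hdeg : d ^ m - d ≤ (Q ⟨0, by omega⟩).totalDegree := by
    zify [Nat.le_self_pow (by omega : m ≠ 0) d]
    exact le_totalDegree_of_aeval_eq_T T_one_mul_kollarCurve_mem hcurve
  have hF0 : KollarF n m d hm hmn ⟨0, by omega⟩ = X (Fin.castLE hmn ⟨0, by omega⟩) ^ d :=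
    if_pos rfl
  refine ⟨hdeg, ?_⟩
  rw [totalDegree_mul_of_isDomain (hF0 ▸ pow_ne_zero _ (X_ne_zero _)) hQ0, hF0,
    totalDegree_X_pow]
  omega
end
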